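/- arXiv:2207.07169 — 4 statements merged into one kernel-verified Lean document; each statement's English description precedes it below -/
import Mathlib

section
/- Let G be a finite simple graph, let xy be an edge of G, and let t be a positive integer. Suppose 2·d(x) + d(y) ≤ 2t + 2, where d denotes degree in G. Then for any partition F₁, F₂, …, F_t of the edge set of G − xy into t linear forests (viewed as spanning subgraphs), there exists an index i ∈ {1, …, t} such that replacing F_i by F_i + xy yields a partition of the edge set of G into t linear forests; moreover, for every vertex v ≠ y, the set of indices j for which v has degree 2 in F_j is unchanged by this replacement. -/
/-- A linear forest: a graph in which every connected component is a path,
equivalently every vertex has degree at most 2 and there are no cycles. -/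
def IsLinearForest {V : Type*} (G : SimpleGraph V) : Prop :=
  G.IsAcyclic ∧ ∀ v : V, (G.neighborSet v).ncard ≤ 2

/-- A partition of the edge set of `G` into `t` linear forests (viewed as
spanning subgraphs). -/
def IsLinearForestPartition {V : Type*} (G : SimpleGraph V) (t : ℕ)
    (F : Fin t → SimpleGraph V) : Prop :=
  (∀ i, IsLinearForest (F i)) ∧
  (Pairwise fun i j : Fin t => Disjoint (F i).edgeSet (F j).edgeSet) ∧
  (⋃ i, (F i).edgeSet) = G.edgeSet

/-- `G` is `k`-degenerate: every (nonempty) subgraph of `G` has a vertex of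
degree at most `k`. -/
def KDegenerate {V : Type*} (G : SimpleGraph V) (k : ℕ) : Prop :=
  ∀ H : G.Subgraph, H.verts.Nonempty → ∃ v ∈ H.verts, (H.neighborSet v).ncard ≤ k

/-!
Summed over the `t` forests, the degrees of `x` and `y` in `G - xy` are `d(x) - 1` and
`d(y) - 1`, so `∑ᵢ (2 d_{Fᵢ}(x) + d_{Fᵢ}(y)) = 2 d(x) + d(y) - 3 < 2t`. Hence some `Fᵢ`
has `x` isolated and `d_{Fᵢ}(y) ≤ 1`. Adding `xy` to that `Fᵢ` hangs the leaf `x` on `y`: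
no cycle can pass through the new leaf, all degrees stay at most 2, and away from `y` only
the degree of `x` changes, from 0 to 1.
-/

namespace SimpleGraph

variable {V : Type*}

lemma neighborSet_sup_edge_of_ne {H : SimpleGraph V} {x y v : V} (hvx : v ≠ x) (hvy : v ≠ y) :
    (H ⊔ edge x y).neighborSet v = H.neighborSet v := by
  ext z
  simp [edge_adj, hvx, hvy]

lemma neighborSet_sup_edge_left {H : SimpleGraph V} {x y : V} (hne : x ≠ y) :
    (H ⊔ edge x y).neighborSet x = insert y (H.neighborSet x) := by
  ext z
  simp only [neighborSet_sup, Set.mem_union, mem_neighborSet, edge_adj, Set.mem_insert_iff]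
  grind

lemma ncard_neighborSet_sup_edge_eq_two_iff {H : SimpleGraph V} {x y v : V} (hne : x ≠ y)
    (hx : H.neighborSet x = ∅) (hvy : v ≠ y) :
    ((H ⊔ edge x y).neighborSet v).ncard = 2 ↔ (H.neighborSet v).ncard = 2 := by
  rcases eq_or_ne v x with rfl | hvx
  · simp [neighborSet_sup_edge_left hne, hx]
  · rw [neighborSet_sup_edge_of_ne hvx hvy]

lemma not_reachable_of_neighborSet_eq_empty {H : SimpleGraph V} {x y : V} (hne : x ≠ y)
    (hx : H.neighborSet x = ∅) : ¬H.Reachable x y := by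
  rintro ⟨p⟩
  cases p with
  | nil => exact hne rfl
  | cons h _ => exact (Set.eq_empty_iff_forall_notMem.mp hx) _ h

lemma neighborSet_deleteEdges_singleton {G : SimpleGraph V} (x y : V) :
    (G.deleteEdges {s(x, y)}).neighborSet x = G.neighborSet x \ {y} := by
  ext z
  simp only [mem_neighborSet, deleteEdges_adj, Set.mem_singleton_iff, Set.mem_sdiff]
  grind

lemma ncard_neighborSet_deleteEdges_singleton_add_one {G : SimpleGraph V} {x y : V}
    (hxy : G.Adj x y) (hfin : (G.neighborSet x).Finite) :
    ((G.deleteEdges {s(x, y)}).neighborSet x).ncard + 1 = (G.neighborSet x).ncard := by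
  rw [neighborSet_deleteEdges_singleton]
  exact Set.ncard_sdiff_singleton_add_one hxy hfin

lemma ncard_neighborSet_eq_degree (G : SimpleGraph V) (v : V) [Fintype (G.neighborSet v)] :
    (G.neighborSet v).ncard = G.degree v :=
  Set.ncard_eq_toFinset_card' _

lemma ncard_neighborSet_eq_sum {ι : Type*} [Fintype ι] {G : SimpleGraph V}
    {F : ι → SimpleGraph V}
    (hdisj : Pairwise fun i j => Disjoint (F i).edgeSet (F j).edgeSet)
    (hcover : ⋃ i, (F i).edgeSet = G.edgeSet) {v : V} (hfin : (G.neighborSet v).Finite) :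
    (G.neighborSet v).ncard = ∑ i, ((F i).neighborSet v).ncard := by
  have hle : ∀ i, F i ≤ G := fun i =>
    edgeSet_subset_edgeSet.mp (hcover ▸ Set.subset_iUnion (fun j => (F j).edgeSet) i)
  have hunion : G.neighborSet v = ⋃ i, (F i).neighborSet v := by
    ext w
    simpa [← mem_edgeSet] using (Set.ext_iff.mp hcover s(v, w)).symm
  rw [hunion, Set.ncard_iUnion_of_finite (s := fun i => (F i).neighborSet v)
    (fun i => hfin.subset fun w h => hle i h)
    (fun i j hij => Set.disjoint_left.mpr fun w (hi : s(v, w) ∈ (F i).edgeSet) hj =>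
      Set.disjoint_left.mp (hdisj hij) hi hj),
    finsum_eq_sum_of_fintype]

end SimpleGraph

lemma exists_eq_zero_and_le_one_of_sum_lt {ι : Type*} [Fintype ι] (a b : ι → ℕ)
    (h : 2 * ∑ i, a i + ∑ i, b i < 2 * Fintype.card ι) : ∃ i, a i = 0 ∧ b i ≤ 1 := by
  by_contra! hab
  have hle : ∀ i ∈ Finset.univ, 2 ≤ 2 * a i + b i := fun i _ => by
    have := hab i
    omega
  have := Finset.sum_le_sum hle
  rw [Finset.sum_add_distrib, ← Finset.mul_sum, Finset.sum_const, Finset.card_univ,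
    smul_eq_mul] at this
  omega

section LinearForest

open SimpleGraph

variable {V : Type*}

lemma IsLinearForest.sup_edge {H : SimpleGraph V} (hH : IsLinearForest H) {x y : V} (hne : x ≠ y)
    (hx : H.neighborSet x = ∅) (hy : (H.neighborSet y).ncard ≤ 1) :
    IsLinearForest (H ⊔ edge x y) := by
  refine ⟨hH.1.sup_edge_of_not_reachable (not_reachable_of_neighborSet_eq_empty hne hx),
    fun v => ?_⟩
  rcases eq_or_ne v x with rfl | hvx
  · simp [neighborSet_sup_edge_left hne, hx]
  rcases eq_or_ne v y with rfl | hvy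
  · rw [edge_comm, neighborSet_sup_edge_left hne.symm]
    exact (Set.ncard_insert_le _ _).trans (by omega)
  · rw [neighborSet_sup_edge_of_ne hvx hvy]
    exact hH.2 v

lemma IsLinearForestPartition.update_sup_edge {G : SimpleGraph V} {t : ℕ}
    {F : Fin t → SimpleGraph V} {x y : V}
    (hF : IsLinearForestPartition (G.deleteEdges {s(x, y)}) t F) (hxy : G.Adj x y)
    {i : Fin t} (hi : IsLinearForest (F i ⊔ edge x y)) :
    IsLinearForestPartition G t (Function.update F i (F i ⊔ edge x y)) := by
  obtain ⟨hlf, hdisj, hcover⟩ := hF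
  have hedge : (F i ⊔ edge x y).edgeSet = (F i).edgeSet ∪ {s(x, y)} := by
    rw [edgeSet_sup, edgeSet_edge_of_ne hxy.ne]
  have hnot_mem : ∀ j, s(x, y) ∉ (F j).edgeSet := fun j h => by
    have := hcover ▸ Set.mem_iUnion_of_mem j h
    simp at this
  refine ⟨fun j => ?_, fun j k hjk => ?_, ?_⟩
  · rcases eq_or_ne j i with rfl | hj
    · simpa using hi
    · simpa [hj] using hlf j
  · simp only [Function.update_apply]
    split_ifs with hj hk hk
    · exact absurd (hj.trans hk.symm) hjk
    · subst hj
      rw [hedge]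
      exact Set.disjoint_union_left.mpr
        ⟨hdisj hjk, Set.disjoint_singleton_left.mpr (hnot_mem k)⟩
    · subst hk
      rw [hedge]
      exact Set.disjoint_union_right.mpr
        ⟨hdisj hjk, Set.disjoint_singleton_right.mpr (hnot_mem j)⟩
    · exact hdisj hjk
  · have hG : G.edgeSet = (⋃ j, (F j).edgeSet) ∪ {s(x, y)} := by
      rw [hcover, edgeSet_deleteEdges, Set.sdiff_union_self, Set.union_eq_left.mpr]
      exact Set.singleton_subset_iff.mpr hxy
    rw [hG]
    ext e
    simp only [Set.mem_iUnion, Set.mem_union, Function.update_apply, apply_ite edgeSet, hedge]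
    grind

end LinearForest

theorem linear_forest_partition_add_edge_general
    {V : Type*} [Fintype V] (G : SimpleGraph V) [DecidableRel G.Adj]
    (x y : V) (hxy : G.Adj x y) (t : ℕ)
    (hdeg : 2 * G.degree x + G.degree y ≤ 2 * t + 2)
    (F : Fin t → SimpleGraph V)
    (hF : IsLinearForestPartition (G.deleteEdges {s(x, y)}) t F) :
    ∃ i : Fin t,
      IsLinearForestPartition G t
        (Function.update F i (F i ⊔ SimpleGraph.fromEdgeSet {s(x, y)})) ∧
      ∀ v : V, v ≠ y → ∀ j : Fin t,
        (((Function.update F i (F i ⊔ SimpleGraph.fromEdgeSet {s(x, y)})) j).neighborSet v).ncard = 2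
          ↔ ((F j).neighborSet v).ncard = 2 := by
  have hdeg_sum : ∀ {u w : V}, G.Adj u w → s(u, w) = s(x, y) →
      ∑ j, ((F j).neighborSet u).ncard + 1 = G.degree u := fun huw he => by
    rw [← SimpleGraph.ncard_neighborSet_eq_sum hF.2.1 hF.2.2 (Set.toFinite _), ← he,
      SimpleGraph.ncard_neighborSet_deleteEdges_singleton_add_one huw (Set.toFinite _),
      SimpleGraph.ncard_neighborSet_eq_degree]
  have hx := hdeg_sum hxy rfl
  have hy := hdeg_sum hxy.symm Sym2.eq_swap
  obtain ⟨i, hxi, hyi⟩ := exists_eq_zero_and_le_one_of_sum_lt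
    (fun j => ((F j).neighborSet x).ncard) (fun j => ((F j).neighborSet y).ncard)
    (by rw [Fintype.card_fin]; omega)
  have hxi : (F i).neighborSet x = ∅ := (Set.ncard_eq_zero).mp hxi
  refine ⟨i, hF.update_sup_edge hxy ((hF.1 i).sup_edge hxy.ne hxi hyi), fun v hvy j => ?_⟩
  rcases eq_or_ne j i with rfl | hj
  · rw [Function.update_self]
    exact SimpleGraph.ncard_neighborSet_sup_edge_eq_two_iff hxy.ne hxi hvy
  · simp [hj]

/-- Brute-force edge addition lemma: if `xy ∈ E(G)` and `2·d(x) + d(y) ≤ 2t + 2`,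
then for any partition of `E(G - xy)` into `t` linear forests `F₁ | … | F_t`
there is an index `i` such that adding `xy` to `F_i` gives a partition of `E(G)`
into `t` linear forests; moreover for every vertex `v ≠ y` the set of indices `j`
for which `v` has degree 2 in `F_j` is unchanged. -/
theorem linear_forest_partition_add_edge
    {V : Type*} [Fintype V] [DecidableEq V] (G : SimpleGraph V) [DecidableRel G.Adj]
    (x y : V) (hxy : G.Adj x y) (t : ℕ) (ht : 1 ≤ t)
    (hdeg : 2 * G.degree x + G.degree y ≤ 2 * t + 2)
    (F : Fin t → SimpleGraph V)
    (hF : IsLinearForestPartition (G.deleteEdges {s(x, y)}) t F) :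
    ∃ i : Fin t,
      IsLinearForestPartition G t
        (Function.update F i (F i ⊔ SimpleGraph.fromEdgeSet {s(x, y)})) ∧
      ∀ v : V, v ≠ y → ∀ j : Fin t,
        (((Function.update F i (F i ⊔ SimpleGraph.fromEdgeSet {s(x, y)})) j).neighborSet v).ncard = 2
          ↔ ((F j).neighborSet v).ncard = 2 :=
  linear_forest_partition_add_edge_general G x y hxy t hdeg F hF
end

section
/- Let k be a positive integer, let G be a finite simple k-degenerate graph with k-degenerate vertex ordering v₁, …, v_n, and let d be an integer with k ≤ d ≤ Δ(G). Then the family of sets { N_R(v_i) : d(v_i) ≥ d } admits a system of distinct representatives of size ⌊(d − k)/k⌋; that is, one can choose mutually disjoint subsets R*(v_i) ⊆ N_R(v_i), one for each vertex v_i with d(v_i) ≥ d, with |R*(v_i)| ≥ ⌊(d − k)/k⌋ for each such i. -/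
/-!
A vertex `y` lies in `N_R(x)` exactly when `x ∈ N_L(y)`, so in at most `k` right
neighbourhoods, while a vertex of degree at least `d` has `|N_R| ≥ d - k ≥ q k` with
`q = ⌊(d - k)/k⌋`. Repeat each such `N_R` `q` times: any `m` members of this family come from
at least `m / q` vertices, whose right neighbourhoods have total size at least `m k` and hence
a union of at least `m` vertices. Hall's theorem gives a system of distinct representatives,
and the `q` representatives of `N_R(x)` form `R*(x)`.
-/

open Finset Function

namespace Finset

variable {ι α : Type*} [Fintype ι] [DecidableEq α] {t : ι → Finset α} {k : ℕ} {q : ι → ℕ}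

/-- Hall's condition for the family in which `t i` is repeated `q i` times. -/
theorem card_le_card_biUnion_sigma_of_multiplicity_le (hk : 0 < k)
    (hmult : ∀ a, #{i | a ∈ t i} ≤ k) (hcard : ∀ i, q i * k ≤ #(t i))
    (s : Finset (Σ i, Fin (q i))) : #s ≤ #(s.biUnion fun p ↦ t p.1) := by
  classical
  set S := s.image Sigma.fst
  set r : ι → α → Prop := fun i a ↦ a ∈ t i
  rw [show s.biUnion (fun p ↦ t p.1) = S.biUnion t by rw [image_biUnion]]
  have hs : #s ≤ ∑ i ∈ S, q i :=
    calc #s ≤ #(S.sigma fun i ↦ (univ : Finset (Fin (q i)))) :=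
          card_le_card fun p hp ↦ mem_sigma.2 ⟨mem_image_of_mem _ hp, mem_univ _⟩
      _ = ∑ i ∈ S, q i := by simp [card_sigma]
  have hdouble : (∑ i ∈ S, q i) * k ≤ #(S.biUnion t) * k :=
    calc (∑ i ∈ S, q i) * k = ∑ i ∈ S, q i * k := sum_mul ..
      _ ≤ ∑ i ∈ S, #((S.biUnion t).bipartiteAbove r i) := sum_le_sum fun i hi ↦ by
          rw [bipartiteAbove, filter_mem_eq_inter, inter_eq_right.2 (subset_biUnion_of_mem t hi)]
          exact hcard i
      _ = ∑ a ∈ S.biUnion t, #(S.bipartiteBelow r a) :=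
          sum_card_bipartiteAbove_eq_sum_card_bipartiteBelow r
      _ ≤ ∑ _a ∈ S.biUnion t, k := sum_le_sum fun a _ ↦
          (card_le_card (filter_subset_filter _ (subset_univ S))).trans (hmult a)
      _ = #(S.biUnion t) * k := by rw [sum_const, smul_eq_mul]
  exact hs.trans (Nat.le_of_mul_le_mul_right hdouble hk)

theorem exists_pairwise_disjoint_subsets_of_multiplicity_le (hk : 0 < k)
    (hmult : ∀ a, #{i | a ∈ t i} ≤ k) (hcard : ∀ i, q i * k ≤ #(t i)) :
    ∃ R : ι → Finset α, (∀ i, R i ⊆ t i) ∧ (∀ i, #(R i) = q i) ∧ Pairwise (Disjoint on R) := by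
  obtain ⟨f, hf, hft⟩ := (all_card_le_biUnion_card_iff_exists_injective
    fun p : Σ i, Fin (q i) ↦ t p.1).1 (card_le_card_biUnion_sigma_of_multiplicity_le hk hmult hcard)
  refine ⟨fun i ↦ univ.image (f ∘ Sigma.mk i), fun i ↦ ?_, fun i ↦ ?_, fun i j hij ↦ ?_⟩
  · exact image_subset_iff.2 fun m _ ↦ hft ⟨i, m⟩
  · rw [card_image_of_injective _ (hf.comp sigma_mk_injective), card_univ, Fintype.card_fin]
  · simp only [onFun, disjoint_left, mem_image]
    rintro _ ⟨m, -, rfl⟩ ⟨m', -, h⟩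
    exact hij (congrArg Sigma.fst (hf h)).symm

end Finset

namespace SimpleGraph

variable {V β : Type*} [Fintype V] (G : SimpleGraph V) [DecidableRel G.Adj] [LinearOrder β]
  (pos : V → β)

/-- `N_L(x)`, for the vertex ordering in which `x` precedes `y` iff `pos x < pos y`. -/
def leftNeighborFinset (x : V) : Finset V := {y ∈ G.neighborFinset x | pos y < pos x}

def rightNeighborFinset (x : V) : Finset V := {y ∈ G.neighborFinset x | pos x < pos y}

variable {G pos}

theorem filter_mem_rightNeighborFinset [DecidableEq V] (y : V) :
    ({x | y ∈ G.rightNeighborFinset pos x} : Finset V) = G.leftNeighborFinset pos y := by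
  ext x
  simp [leftNeighborFinset, rightNeighborFinset, adj_comm]

theorem card_leftNeighborFinset_add_card_rightNeighborFinset (hpos : Injective pos) (x : V) :
    #(G.leftNeighborFinset pos x) + #(G.rightNeighborFinset pos x) = G.degree x := by
  rw [← card_neighborFinset_eq_degree,
    ← card_filter_add_card_filter_not (s := G.neighborFinset x) fun y ↦ pos y < pos x,
    rightNeighborFinset]
  congr 2
  refine filter_congr fun y hy ↦ ?_
  have hne : pos x ≠ pos y := hpos.ne ((mem_neighborFinset G x y).1 hy).ne
  rw [not_lt, lt_iff_le_and_ne, and_iff_left hne]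

theorem exists_pairwise_disjoint_subsets_rightNeighborFinset [DecidableEq V]
    (hpos : Injective pos) {k : ℕ} (hk : 0 < k) (hleft : ∀ x, #(G.leftNeighborFinset pos x) ≤ k)
    (d : ℕ) :
    ∃ R : V → Finset V, (∀ x, R x ⊆ G.rightNeighborFinset pos x) ∧
      (∀ x, d ≤ G.degree x → #(R x) = (d - k) / k) ∧ Pairwise (Disjoint on R) := by
  set q : V → ℕ := fun x ↦ if d ≤ G.degree x then (d - k) / k else 0
  have hcard (x : V) : q x * k ≤ #(G.rightNeighborFinset pos x) := by
    by_cases hx : d ≤ G.degree x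
    · have hdeg := card_leftNeighborFinset_add_card_rightNeighborFinset (G := G) hpos x
      have hdiv := Nat.div_mul_le_self (d - k) k
      have hleftx := hleft x
      simp only [q, if_pos hx]
      omega
    · simp [q, hx]
  obtain ⟨R, hRsub, hRcard, hRdisj⟩ := exists_pairwise_disjoint_subsets_of_multiplicity_le hk
    (fun y ↦ (congrArg card (filter_mem_rightNeighborFinset y)).trans_le (hleft y)) hcard
  exact ⟨R, hRsub, fun x hx ↦ (hRcard x).trans (if_pos hx), hRdisj⟩

variable {ι : Type*} [LinearOrder ι] (e : ι ≃ V) (i : ι)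

theorem coe_leftNeighborFinset_symm :
    (G.leftNeighborFinset e.symm (e i) : Set V) = G.neighborSet (e i) ∩ e '' {j | j < i} := by
  ext y
  simp [leftNeighborFinset, e.image_eq_preimage_symm]

theorem coe_rightNeighborFinset_symm :
    (G.rightNeighborFinset e.symm (e i) : Set V) = G.neighborSet (e i) ∩ e '' {j | i < j} := by
  ext y
  simp [rightNeighborFinset, e.image_eq_preimage_symm]

end SimpleGraph

theorem sdr_of_degenerate_ordering_general
    {V : Type*} [Fintype V] [DecidableEq V] (G : SimpleGraph V) [DecidableRel G.Adj]
    (k : ℕ) (hk : 1 ≤ k) (n : ℕ) (v : Fin n → V) (hv : Function.Bijective v)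
    (horder : ∀ i : Fin n, (G.neighborSet (v i) ∩ (v '' {j | j < i})).ncard ≤ k)
    (d : ℕ) :
    ∃ R : Fin n → Set V,
      (∀ i : Fin n, R i ⊆ G.neighborSet (v i) ∩ (v '' {j | i < j})) ∧
      (∀ i : Fin n, d ≤ G.degree (v i) → (d - k) / k ≤ (R i).ncard) ∧
      (Pairwise fun i j : Fin n => Disjoint (R i) (R j)) := by
  set e := Equiv.ofBijective v hv
  have hleft (x : V) : #(G.leftNeighborFinset e.symm x) ≤ k := by
    rw [← e.apply_symm_apply x, ← Set.ncard_coe_finset, G.coe_leftNeighborFinset_symm]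
    exact horder _
  obtain ⟨R, hRsub, hRcard, hRdisj⟩ :=
    G.exists_pairwise_disjoint_subsets_rightNeighborFinset e.symm.injective hk hleft d
  refine ⟨fun i ↦ R (v i), fun i ↦ ?_, fun i hi ↦ ?_, fun i j hij ↦ ?_⟩
  · exact (G.coe_rightNeighborFinset_symm e i).subst (coe_subset.2 (hRsub (v i)))
  · rw [Set.ncard_coe_finset, hRcard _ hi]
  · exact disjoint_coe.2 (hRdisj (hv.1.ne hij))

/-- In a `k`-degenerate graph with `k`-degenerate vertex ordering `v₁, …, v_n`
and any `d` with `k ≤ d ≤ Δ(G)`, the family `{ N_R(v_i) : d(v_i) ≥ d }` admits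
a system of distinct representatives of size `⌊(d - k)/k⌋`. -/
theorem sdr_of_degenerate_ordering
    {V : Type*} [Fintype V] [DecidableEq V] (G : SimpleGraph V) [DecidableRel G.Adj]
    (k : ℕ) (hk : 1 ≤ k) (n : ℕ) (v : Fin n → V) (hv : Function.Bijective v)
    (horder : ∀ i : Fin n, (G.neighborSet (v i) ∩ (v '' {j | j < i})).ncard ≤ k)
    (d : ℕ) (hd1 : k ≤ d) (hd2 : d ≤ G.maxDegree) :
    ∃ R : Fin n → Set V,
      (∀ i : Fin n, R i ⊆ G.neighborSet (v i) ∩ (v '' {j | i < j})) ∧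
      (∀ i : Fin n, d ≤ G.degree (v i) → (d - k) / k ≤ (R i).ncard) ∧
      (Pairwise fun i j : Fin n => Disjoint (R i) (R j)) :=
  sdr_of_degenerate_ordering_general G k hk n v hv horder d
end

section
/- Let A₁, …, A_m be subsets of a finite set and let r be a positive integer. There exist mutually disjoint subsets A₁* ⊆ A₁, …, A_m* ⊆ A_m with |A_i*| ≥ r for each i ∈ {1, …, m} if and only if for every index set I ⊆ {1, …, m}, the union ∪_{i∈I} A_i has size at least r·|I|. -/
/-- Variant of Hall's marriage theorem: a family `A₁, …, A_m` of subsets of a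
finite set has a system of distinct representatives of size `r` (mutually
disjoint subsets `A_i* ⊆ A_i` with `|A_i*| ≥ r`) if and only if
`|∪_{i ∈ I} A_i| ≥ r·|I|` for every index set `I ⊆ {1, …, m}`. -/
theorem sdr_of_size_r_iff
    {α : Type*} [Fintype α] [DecidableEq α]
    (m : ℕ) (A : Fin m → Finset α) (r : ℕ) (hr : 1 ≤ r) :
    (∃ B : Fin m → Finset α,
        (∀ i, B i ⊆ A i) ∧ (∀ i, r ≤ (B i).card) ∧
        Pairwise fun i j : Fin m => Disjoint (B i) (B j)) ↔
    (∀ I : Finset (Fin m), r * I.card ≤ (I.biUnion A).card) := by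
  constructor
  · rintro ⟨B, hBA, hBcard, hBdisj⟩ I
    calc r * I.card = ∑ i ∈ I, r := by rw [Finset.sum_const, smul_eq_mul, mul_comm]
      _ ≤ ∑ i ∈ I, (B i).card := Finset.sum_le_sum fun i _ => hBcard i
      _ = (I.biUnion B).card := (Finset.card_biUnion (fun i _ j _ hij => hBdisj hij)).symm
      _ ≤ (I.biUnion A).card := Finset.card_le_card
          (by
            intro x hx
            simp only [Finset.mem_biUnion] at hx ⊢
            obtain ⟨i, hi, hx⟩ := hx
            exact ⟨i, hi, hBA i hx⟩)
  · intro h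
    set t : Fin m × Fin r → Finset α := fun p => A p.1 with ht
    have hall : ∀ s : Finset (Fin m × Fin r), s.card ≤ (s.biUnion t).card := by
      intro s
      have himg : s.biUnion t = (s.image Prod.fst).biUnion A := by
        ext x
        simp only [Finset.mem_biUnion, Finset.mem_image, ht]
        constructor
        · rintro ⟨p, hp, hx⟩; exact ⟨p.1, ⟨p, hp, rfl⟩, hx⟩
        · rintro ⟨i, ⟨p, hp, rfl⟩, hx⟩; exact ⟨p, hp, hx⟩
      rw [himg]
      refine le_trans ?_ (h _)
      calc s.card ≤ ((s.image Prod.fst) ×ˢ (Finset.univ : Finset (Fin r))).card := by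
            apply Finset.card_le_card
            intro p hp
            rw [Finset.mem_product]
            exact ⟨Finset.mem_image_of_mem _ hp, Finset.mem_univ _⟩
        _ = r * (s.image Prod.fst).card := by
            rw [Finset.card_product, Finset.card_univ, Fintype.card_fin, mul_comm]
    obtain ⟨f, hf, hft⟩ := (Finset.all_card_le_biUnion_card_iff_exists_injective t).mp hall
    refine ⟨fun i => Finset.image (fun j => f (i, j)) Finset.univ, ?_, ?_, ?_⟩
    · intro i x hx
      simp only [Finset.mem_image] at hx
      obtain ⟨j, _, rfl⟩ := hx
      exact hft (i, j)
    · intro i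
      rw [Finset.card_image_of_injective _ (fun j₁ j₂ hj => by
        have := hf hj; simpa using congrArg Prod.snd this)]
      simp
    · intro i j hij
      simp only [Finset.disjoint_left, Finset.mem_image]
      rintro x ⟨a, _, rfl⟩ ⟨b, _, hb⟩
      have := hf hb.symm
      exact hij (congrArg Prod.fst this)
end

section
/- Let k be a positive integer and let G be a finite simple k-degenerate graph with maximum degree Δ = Δ(G) > 1. Then there exists a finite simple k-degenerate graph G* that is (Δ,1)-regular (every vertex of G* has degree exactly Δ or exactly 1) and contains G as a subgraph; consequently the linear arboricity of G is at most that of G*. -/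
/-- The linear arboricity of `G`: the minimum number of linear forests needed
to partition the edge set of `G`. -/
noncomputable def linearArboricity {V : Type*} (G : SimpleGraph V) : ℕ :=
  sInf {t : ℕ | ∃ F : Fin t → SimpleGraph V, IsLinearForestPartition G t F}

/-! Attach `Δ - deg v` pendant leaves to every vertex `v` of `G`. The old vertices then have
degree `Δ` and the new ones degree `1`. A subgraph of the result either contains a leaf, of
degree at most `1 ≤ k`, or lives inside `G`, so `k`-degeneracy survives. Restricting a
linear-forest partition of the supergraph to `G` gives one of `G`, hence `la G ≤ la G*`. -/

namespace SimpleGraph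

variable {V W : Type*} {G : SimpleGraph V} {G' : SimpleGraph W}

lemma ncard_neighborSet_le_maxDegree [Fintype V] [DecidableRel G.Adj] (v : V) :
    (G.neighborSet v).ncard ≤ G.maxDegree := by
  rw [Set.ncard_eq_toFinset_card', Set.toFinset_card, card_neighborSet_eq_degree]
  exact G.degree_le_maxDegree v

lemma Iso.ncard_neighborSet (φ : G ≃g G') (v : V) :
    (G'.neighborSet (φ v)).ncard = (G.neighborSet v).ncard := by
  rw [← φ.image_neighborSet, Set.ncard_image_of_injective _ φ.injective]

lemma Subgraph.neighborSet_map_of_injective (f : G →g G') (hf : Function.Injective f)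
    (H : G.Subgraph) (v : V) : (H.map f).neighborSet (f v) = f '' H.neighborSet v := by
  ext w
  simp only [Subgraph.mem_neighborSet, Subgraph.map_adj, Relation.Map, Set.mem_image]
  constructor
  · rintro ⟨x, y, hxy, hx, rfl⟩
    exact ⟨y, hf hx ▸ hxy, rfl⟩
  · rintro ⟨y, hy, rfl⟩
    exact ⟨v, y, hy, rfl, rfl⟩

end SimpleGraph

open SimpleGraph

section Transfer

variable {V W : Type*} {G : SimpleGraph V} {G' : SimpleGraph W}

lemma KDegenerate.comap {k : ℕ} (f : G →g G') (hf : Function.Injective f)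
    (h : KDegenerate G' k) : KDegenerate G k := by
  intro H hne
  obtain ⟨_, ⟨v, hv, rfl⟩, hdeg⟩ := h (H.map f) (hne.image f)
  refine ⟨v, hv, ?_⟩
  rwa [Subgraph.neighborSet_map_of_injective f hf, Set.ncard_image_of_injective _ hf] at hdeg

lemma IsLinearForest.comap [Finite W] (f : G →g G') (hf : Function.Injective f)
    (h : IsLinearForest G') : IsLinearForest G := by
  refine ⟨h.1.comap f hf, fun v => ?_⟩
  calc (G.neighborSet v).ncard = (f '' G.neighborSet v).ncard :=
        (Set.ncard_image_of_injective _ hf).symm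
    _ ≤ (G'.neighborSet (f v)).ncard := Set.ncard_le_ncard (f.image_neighborSet_subset v)
    _ ≤ 2 := h.2 (f v)

lemma isLinearForest_of_subsingleton_neighborSet (h : ∀ v, (G.neighborSet v).Subsingleton) :
    IsLinearForest G := by
  have hle {s : Set V} (hs : s.Subsingleton) : s.ncard ≤ 1 := (Set.ncard_le_one hs.finite).mpr hs
  refine ⟨fun v c hc => ?_, fun v => (hle (h v)).trans one_le_two⟩
  have htwo := hc.ncard_neighborSet_toSubgraph_eq_two c.start_mem_support
  have hone := hle <| (h v).anti (c.toSubgraph.neighborSet_subset v)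
  omega

lemma subsingleton_neighborSet_fromEdgeSet_singleton (e : Sym2 V) (v : V) :
    ((fromEdgeSet {e}).neighborSet v).Subsingleton := by
  induction e using Sym2.ind with
  | _ x y =>
    intro a ha b hb
    simp only [mem_neighborSet, fromEdgeSet_adj, Set.mem_singleton_iff, Sym2.eq_iff] at ha hb
    grind

lemma exists_isLinearForestPartition [Finite V] (G : SimpleGraph V) :
    ∃ t F, IsLinearForestPartition G t F := by
  let e : Fin (Nat.card G.edgeSet) ≃ G.edgeSet := (Finite.equivFin _).symm
  refine ⟨_, fun i => fromEdgeSet {(e i : Sym2 V)},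
    fun i => isLinearForest_of_subsingleton_neighborSet
      (subsingleton_neighborSet_fromEdgeSet_singleton _), fun i j hij => ?_, ?_⟩
  · simp only [edgeSet_fromEdgeSet]
    refine (Set.disjoint_singleton.mpr fun h => hij (e.injective (Subtype.ext h))).mono
      Set.sdiff_subset Set.sdiff_subset
  · ext s
    simp only [edgeSet_fromEdgeSet, Set.mem_iUnion, Set.mem_sdiff, Set.mem_singleton_iff]
    constructor
    · rintro ⟨i, rfl, -⟩
      exact (e i).2
    · intro hs
      exact ⟨e.symm ⟨s, hs⟩, by rw [e.apply_symm_apply], G.not_isDiag_of_mem_edgeSet hs⟩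

lemma IsLinearForestPartition.comap [Finite W] {t : ℕ} {F : Fin t → SimpleGraph W}
    (hF : IsLinearForestPartition G' t F) (f : G →g G') (hf : Function.Injective f) :
    IsLinearForestPartition G t fun i => G ⊓ (F i).comap f := by
  obtain ⟨hlin, hdisj, hunion⟩ := hF
  refine ⟨fun i => (hlin i).comap ⟨f, fun h => h.2⟩ hf, fun i j hij => ?_, ?_⟩
  · refine Set.disjoint_left.mpr fun s hi hj => ?_
    induction s using Sym2.ind with
    | _ u v =>
      exact Set.disjoint_left.mp (hdisj hij) (show s(f u, f v) ∈ (F i).edgeSet from hi.2) hj.2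
  · ext s
    induction s using Sym2.ind with
    | _ u v =>
      simp only [Set.mem_iUnion, mem_edgeSet, inf_adj, comap_adj]
      have := congrArg (s(f u, f v) ∈ ·) hunion
      simp only [Set.mem_iUnion, mem_edgeSet, eq_iff_iff] at this
      grind [f.map_adj]

lemma linearArboricity_le_of_injective [Finite W] (f : G →g G') (hf : Function.Injective f) :
    linearArboricity G ≤ linearArboricity G' := by
  obtain ⟨F, hF⟩ := Nat.sInf_mem (exists_isLinearForestPartition G')
  exact Nat.sInf_le ⟨_, hF.comap f hf⟩

end Transfer

namespace SimpleGraph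

variable {V : Type*} (G : SimpleGraph V) (d : V → ℕ)

/-- `G` with `d v` new pendant vertices `inr ⟨v, i⟩` attached to each vertex `v`. -/
def attachLeaves : SimpleGraph (V ⊕ Σ v, Fin (d v)) where
  Adj
    | .inl u, .inl v => G.Adj u v
    | .inl u, .inr p | .inr p, .inl u => p.1 = u
    | .inr _, .inr _ => False
  symm := ⟨by
    rintro (u | p) (v | q) h
    exacts [h.symm, h, h, h]⟩
  loopless := ⟨by
    rintro (u | p) h
    exacts [G.loopless.irrefl u h, h]⟩

def attachLeavesEmbedding : G ↪g G.attachLeaves d :=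
  ⟨Function.Embedding.inl, Iff.rfl⟩

lemma neighborSet_attachLeaves_inr (p : Σ v, Fin (d v)) :
    (G.attachLeaves d).neighborSet (.inr p) = {.inl p.1} := by
  ext (u | q)
  · simp [attachLeaves, eq_comm]
  · simp [attachLeaves]

lemma neighborSet_attachLeaves_inl (v : V) :
    (G.attachLeaves d).neighborSet (.inl v) =
      Sum.inl '' G.neighborSet v ∪ Sum.inr '' Set.range (Sigma.mk v) := by
  ext (u | q)
  · simp [attachLeaves]
  · simp [attachLeaves, eq_comm]

lemma ncard_neighborSet_attachLeaves_inl [Finite V] (v : V) :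
    ((G.attachLeaves d).neighborSet (.inl v)).ncard = (G.neighborSet v).ncard + d v := by
  rw [neighborSet_attachLeaves_inl, Set.ncard_union_eq (Set.disjoint_left.mpr ?_),
    Set.ncard_image_of_injective _ Sum.inl_injective,
    Set.ncard_image_of_injective _ Sum.inr_injective,
    Set.ncard_range_of_injective sigma_mk_injective, Nat.card_eq_fintype_card, Fintype.card_fin]
  rintro _ ⟨u, -, rfl⟩ ⟨q, -, hq⟩
  exact Sum.inl_ne_inr hq.symm

lemma ncard_neighborSet_attachLeaves_eq_or_eq_one [Finite V] {D : ℕ}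
    (hD : ∀ v, (G.neighborSet v).ncard ≤ D) :
    ∀ w, ((G.attachLeaves fun v => D - (G.neighborSet v).ncard).neighborSet w).ncard = D ∨
      ((G.attachLeaves fun v => D - (G.neighborSet v).ncard).neighborSet w).ncard = 1
  | .inl v => .inl <| by rw [ncard_neighborSet_attachLeaves_inl]; have := hD v; omega
  | .inr p => .inr <| by rw [neighborSet_attachLeaves_inr, Set.ncard_singleton]

end SimpleGraph

open SimpleGraph

lemma KDegenerate.attachLeaves {V : Type*} {G : SimpleGraph V} {k : ℕ} (hk : 1 ≤ k)
    (h : KDegenerate G k) (d : V → ℕ) : KDegenerate (G.attachLeaves d) k := by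
  intro H hne
  by_cases hleaf : ∃ p, Sum.inr p ∈ H.verts
  · obtain ⟨p, hp⟩ := hleaf
    refine ⟨.inr p, hp, le_trans ?_ hk⟩
    calc (H.neighborSet (.inr p)).ncard ≤ ((G.attachLeaves d).neighborSet (.inr p)).ncard :=
          Set.ncard_le_ncard (H.neighborSet_subset _) (by simp [neighborSet_attachLeaves_inr])
      _ = 1 := by rw [neighborSet_attachLeaves_inr, Set.ncard_singleton]
  · push Not at hleaf
    let ι := (G.attachLeavesEmbedding d).toHom
    have hverts : H.verts ⊆ Set.range Sum.inl := by
      rintro (u | p) hu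
      exacts [⟨u, rfl⟩, (hleaf p hu).elim]
    obtain ⟨v, hv, hdeg⟩ := h (H.comap ι) (by
      obtain ⟨_, hx⟩ := hne
      obtain ⟨u, rfl⟩ := hverts hx
      exact ⟨u, hx⟩)
    have hnbr : H.neighborSet (.inl v) = Sum.inl '' (H.comap ι).neighborSet v := by
      ext w
      constructor
      · intro hw
        obtain ⟨u, rfl⟩ := hverts (H.edge_vert hw.symm)
        exact ⟨u, ⟨H.adj_sub hw, hw⟩, rfl⟩
      · rintro ⟨u, hu, rfl⟩
        exact hu.2
    refine ⟨.inl v, hv, ?_⟩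
    rwa [hnbr, Set.ncard_image_of_injective _ Sum.inl_injective]

theorem exists_regular_degenerate_supergraph_general
    {V : Type*} [Fintype V] (G : SimpleGraph V) [DecidableRel G.Adj]
    (k : ℕ) (hk : 1 ≤ k) (hdegen : KDegenerate G k) :
    ∃ (W : Type) (_ : Fintype W) (G' : SimpleGraph W) (f : V ↪ W),
      (∀ u v : V, G.Adj u v → G'.Adj (f u) (f v)) ∧
      KDegenerate G' k ∧
      (∀ w : W, (G'.neighborSet w).ncard = G.maxDegree ∨ (G'.neighborSet w).ncard = 1) ∧
      linearArboricity G ≤ linearArboricity G' := by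
  let H := G.attachLeaves fun v => G.maxDegree - (G.neighborSet v).ncard
  -- `H` lives in the universe of `V`; relabel its vertices by `Fin n` to land in `Type`.
  let φ := H.overFinIso rfl
  let ι : G ↪g H.overFin rfl := (G.attachLeavesEmbedding _).trans φ.toEmbedding
  refine ⟨_, inferInstance, H.overFin rfl, ι.toEmbedding, fun u v => ι.map_adj_iff.mpr,
    (hdegen.attachLeaves hk _).comap φ.symm.toHom φ.symm.injective, fun w => ?_,
    linearArboricity_le_of_injective ι.toHom ι.injective⟩
  obtain ⟨w, rfl⟩ := φ.surjective w
  rw [φ.ncard_neighborSet]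
  exact G.ncard_neighborSet_attachLeaves_eq_or_eq_one ncard_neighborSet_le_maxDegree w

/-- Every `k`-degenerate graph `G` with maximum degree `Δ > 1` is contained,
as a subgraph, in a `k`-degenerate `(Δ,1)`-regular graph `G*`; consequently
`la(G) ≤ la(G*)`. -/
theorem exists_regular_degenerate_supergraph
    {V : Type*} [Fintype V] [DecidableEq V] (G : SimpleGraph V) [DecidableRel G.Adj]
    (k : ℕ) (hk : 1 ≤ k) (hdegen : KDegenerate G k) (hΔ : 1 < G.maxDegree) :
    ∃ (W : Type) (_ : Fintype W) (G' : SimpleGraph W) (f : V ↪ W),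
      (∀ u v : V, G.Adj u v → G'.Adj (f u) (f v)) ∧
      KDegenerate G' k ∧
      (∀ w : W, (G'.neighborSet w).ncard = G.maxDegree ∨ (G'.neighborSet w).ncard = 1) ∧
      linearArboricity G ≤ linearArboricity G' :=
  exists_regular_degenerate_supergraph_general G k hk hdegen
end
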